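/- arXiv:2603.02088 — 2 statements merged into one kernel-verified Lean document; each statement's English description precedes it below -/
import Mathlib

section
/- Let Λ be the lattice in ℝ² generated by (φ, 1) and (1, −φ), where φ = (1+√5)/2. Then applying diag(1+φ, (1+φ)⁻¹) to Λ gives back Λ; i.e., Λ is fixed by the modular flow at time t₀ = ln(1+φ). -/
theorem stmt_6 :
    let φ : ℝ := (1 + Real.sqrt 5) / 2
    let Λ : Set (ℝ × ℝ) := {p | ∃ a b : ℤ, p = a • ((φ, 1) : ℝ × ℝ) + b • ((1, -φ) : ℝ × ℝ)}
    (fun p : ℝ × ℝ => ((1 + φ) * p.1, (1 + φ)⁻¹ * p.2)) '' Λ = Λ := by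
  intro φ Λ
  have h5 : Real.sqrt 5 ^ 2 = 5 := Real.sq_sqrt (by norm_num)
  have hφ : φ ^ 2 = φ + 1 := by show ((1+Real.sqrt 5)/2)^2 = (1+Real.sqrt 5)/2 + 1; linear_combination h5/4
  have hinv : (1 + φ)⁻¹ = 2 - φ := by
    have h1 : (1 + φ) * (2 - φ) = 1 := by nlinarith [hφ]
    exact inv_eq_of_mul_eq_one_right h1
  ext p
  simp only [Λ, Set.mem_image, Set.mem_setOf_eq]
  constructor
  · rintro ⟨q, ⟨a, b, rfl⟩, rfl⟩
    refine ⟨2*a+b, a+b, ?_⟩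
    simp only [Prod.smul_mk, Prod.mk_add_mk, Prod.ext_iff, hinv, zsmul_eq_mul]
    push_cast
    constructor
    · linear_combination (a:ℝ) * hφ
    · linear_combination (b:ℝ) * hφ
  · rintro ⟨a, b, rfl⟩
    refine ⟨((a-b : ℤ)) • ((φ, 1) : ℝ × ℝ) + ((-a+2*b : ℤ)) • ((1, -φ) : ℝ × ℝ),
      ⟨a-b, -a+2*b, rfl⟩, ?_⟩
    simp only [Prod.smul_mk, Prod.mk_add_mk, Prod.ext_iff, hinv, zsmul_eq_mul]
    push_cast
    constructor
    · linear_combination ((a:ℝ) - b) * hφ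
    · linear_combination (2*(b:ℝ) - a) * hφ
end

section
/- Let Λ be the lattice in ℝ² generated by (2√(2/3), −2√(2/3)) and (1, 1). Then diag(5+2√6, (5+2√6)⁻¹)·Λ = Λ. -/
theorem stmt_7 :
    let c : ℝ := 2 * Real.sqrt (2 / 3)
    let Λ : Set (ℝ × ℝ) := {p | ∃ a b : ℤ, p = a • ((c, -c) : ℝ × ℝ) + b • ((1, 1) : ℝ × ℝ)}
    (fun p : ℝ × ℝ => ((5 + 2 * Real.sqrt 6) * p.1, (5 + 2 * Real.sqrt 6)⁻¹ * p.2)) '' Λ = Λ := by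
  intro c Λ
  have hs : Real.sqrt 6 * Real.sqrt 6 = 6 := Real.mul_self_sqrt (by norm_num)
  have hc : c = 2 * (Real.sqrt 6 / 3) := by
    have h23 : Real.sqrt (2 / 3) = Real.sqrt 6 / 3 := by
      rw [show (2:ℝ)/3 = (Real.sqrt 6 / 3)^2 by
        rw [div_pow, Real.sq_sqrt (by norm_num : (6:ℝ) ≥ 0)]; norm_num]
      exact Real.sqrt_sq (by positivity)
    simp only [c, h23]
  have hinv : (5 + 2 * Real.sqrt 6)⁻¹ = 5 - 2 * Real.sqrt 6 := by
    refine inv_eq_of_mul_eq_one_right ?_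
    nlinarith [hs]
  have hs2 : Real.sqrt 6 ^ 2 = 6 := Real.sq_sqrt (by norm_num)
  ext p
  simp only [Set.mem_image, Λ, Set.mem_setOf_eq, Prod.smul_mk, smul_eq_mul, Prod.mk_add_mk,
    zsmul_eq_mul]
  constructor
  · rintro ⟨q, ⟨a, b, rfl⟩, rfl⟩
    refine ⟨5*a + 3*b, 8*a + 5*b, ?_⟩
    simp only [Prod.ext_iff, hinv]
    push_cast
    constructor <;> (rw [hc]; ring_nf; rw [hs2]; ring)
  · rintro ⟨a, b, rfl⟩
    refine ⟨(5*a - 3*b : ℤ) • ((c, -c) : ℝ × ℝ) + (-8*a + 5*b : ℤ) • ((1, 1) : ℝ × ℝ),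
      ⟨5*a - 3*b, -8*a + 5*b, by simp [zsmul_eq_mul, Prod.ext_iff]⟩, ?_⟩
    simp only [Prod.smul_mk, smul_eq_mul, Prod.mk_add_mk, Prod.ext_iff, hinv, zsmul_eq_mul]
    push_cast
    constructor <;> (rw [hc]; ring_nf; rw [hs2]; ring)
end
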